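/- Let d ∈ ℕ and let 0 < b < B ≤ d. Then there exists a compact set C ⊆ [0,1]^d such that lb-dim C = b, ub-dim C = B, and the covering regularity exponent satisfies p_t(C) = (b/t)·(d−t)/(d−b) for all t ∈ (b,B). -/

import Mathlib

open Set Filter Topology Metric MeasureTheory

/-- Minimum number of sets of diameter at most `δ` needed to cover `F`. -/
noncomputable def coverN {X : Type*} [MetricSpace X] (F : Set X) (δ : ℝ) : ℕ :=
  sInf {n : ℕ | ∃ U : Fin n → Set X, (∀ i, EMetric.diam (U i) ≤ ENNReal.ofReal δ) ∧ F ⊆ ⋃ i, U i}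

/-- Lower box dimension. -/
noncomputable def lbDim {X : Type*} [MetricSpace X] (F : Set X) : ℝ :=
  Filter.liminf (fun δ : ℝ => Real.log (coverN F δ) / (-Real.log δ)) (𝓝[>] 0)

/-- Upper box dimension. -/
noncomputable def ubDim {X : Type*} [MetricSpace X] (F : Set X) : ℝ :=
  Filter.limsup (fun δ : ℝ => Real.log (coverN F δ) / (-Real.log δ)) (𝓝[>] 0)

/-- The `(t,δ)`-covering regularity exponent `p_{t,δ}(C)`. -/
noncomputable def cre {X : Type*} [MetricSpace X] (C : Set X) (t δ : ℝ) : ℝ :=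
  sSup {p : ℝ | 0 ≤ p ∧ p ≤ 1 ∧ δ ^ (-(p * t)) ≤ (coverN C (δ ^ p) : ℝ)}

/-- The `t`-covering regularity exponent `p_t(C)`. -/
noncomputable def creT {X : Type*} [MetricSpace X] (C : Set X) (t : ℝ) : ℝ :=
  Filter.liminf (fun δ : ℝ => cre C t δ) (𝓝[>] 0)

/-!
The set is `A^d`, where `A ⊆ [0, 1]` consists of the numbers with a binary expansion whose
`1`-digits all lie in a fixed set `J ⊆ ℕ` of free positions. At scale `2 ^ (-m)` the set `A^d`
needs about `2 ^ F(m)` sets to cover it, where `F(m) = d · #(J ∩ [0, m))`; so the box dimensions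
are `liminf F(m)/m` and `limsup F(m)/m`, and `F` has slope `d` on `J` and slope `0` off `J`.
We take `J` to be a union of blocks `[u_k, v_k)`: each block is just long enough for `F(m)/m` to
climb to a level `B_k ↑ B`, and the next block starts when `F(m)/m` has fallen back to `b`.

For `t ∈ (b, B)` the extremal scales are the block starts `U = u_k`, where `F(U) ≈ b U`: the last
scale `m` with `F(m) ≥ t m` is then `m ≈ b U / t`, while `F(n) < t n` persists up to
`n ≈ (d - b) U / (d - t)`, and the ratio `m / n` tends to `(b / t) (d - t) / (d - b)`.
-/

noncomputable section

open scoped Classical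

section CoveringNumbers

variable {X : Type*} [MetricSpace X] {F : Set X} {δ : ℝ}

theorem coverN_le_card {ι : Type*} [Fintype ι] (U : ι → Set X)
    (hU : ∀ i, ediam (U i) ≤ ENNReal.ofReal δ) (hF : F ⊆ ⋃ i, U i) :
    coverN F δ ≤ Fintype.card ι := by
  refine Nat.sInf_le ⟨fun i => U ((Fintype.equivFin ι).symm i), fun i => hU _, fun x hx => ?_⟩
  obtain ⟨i, hi⟩ := mem_iUnion.1 (hF hx)
  exact mem_iUnion.2 ⟨Fintype.equivFin ι i, by simpa using hi⟩

theorem card_le_coverN {ι ι' : Type*} [Fintype ι] [Fintype ι'] {r : ℝ} (hδ : 0 ≤ δ) (hδr : δ < r)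
    (U : ι' → Set X) (hU : ∀ i, ediam (U i) ≤ ENNReal.ofReal δ) (hF : F ⊆ ⋃ i, U i)
    (y : ι → X) (hy : ∀ i, y i ∈ F) (hsep : Pairwise fun i j => r ≤ dist (y i) (y j)) :
    Fintype.card ι ≤ coverN F δ := by
  obtain ⟨V, hV, hFV⟩ := Nat.sInf_mem (s := {n : ℕ | ∃ V : Fin n → Set X,
    (∀ i, ediam (V i) ≤ ENNReal.ofReal δ) ∧ F ⊆ ⋃ i, V i})
    ⟨_, fun i => U ((Fintype.equivFin ι').symm i), fun i => hU _, fun x hx => by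
      obtain ⟨i, hi⟩ := mem_iUnion.1 (hF hx)
      exact mem_iUnion.2 ⟨Fintype.equivFin ι' i, by simpa using hi⟩⟩
  choose f hf using fun i => mem_iUnion.1 (hFV (hy i))
  refine (Fintype.card_le_of_injective f fun i j hij => by_contra fun hne => ?_).trans_eq
    (Fintype.card_fin _)
  have h : edist (y i) (y j) ≤ ENNReal.ofReal δ :=
    (edist_le_ediam_of_mem (hf i) (hij ▸ hf j)).trans (hV _)
  rw [edist_le_ofReal hδ] at h
  exact (hδr.trans_le (hsep hne)).not_ge h

theorem cre_le_one (C : Set X) (t δ : ℝ) : cre C t δ ≤ 1 :=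
  Real.sSup_le (fun _ hp => hp.2.1) zero_le_one

def dimRatio (C : Set X) (δ : ℝ) : ℝ :=
  Real.log (coverN C δ) / -Real.log δ

theorem dimRatio_two_rpow (C : Set X) (x : ℝ) :
    dimRatio C ((2 : ℝ) ^ (-x)) = Real.logb 2 (coverN C ((2 : ℝ) ^ (-x))) / x := by
  rw [dimRatio, Real.log_rpow two_pos, Real.logb, div_div, neg_mul, neg_neg, mul_comm]

end CoveringNumbers

theorem EuclideanSpace.dist_le_sqrt_mul {d : ℕ} {x y : EuclideanSpace ℝ (Fin d)} {r : ℝ}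
    (hr : 0 ≤ r) (h : ∀ i, dist (x i) (y i) ≤ r) : dist x y ≤ √d * r := by
  rw [EuclideanSpace.dist_eq, ← Real.sqrt_sq hr, ← Real.sqrt_mul (Nat.cast_nonneg d)]
  gcongr
  calc ∑ i, dist (x i) (y i) ^ 2 ≤ ∑ _i : Fin d, r ^ 2 := by gcongr with i; exact h i
    _ = d * r ^ 2 := by simp

theorem Real.sqrt_natCast_le_two_pow (d : ℕ) : √(d : ℝ) ≤ 2 ^ d := by
  rw [Real.sqrt_le_left (by positivity)]
  have : (d : ℝ) < 2 ^ d := by exact_mod_cast Nat.lt_two_pow_self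
  nlinarith [one_le_pow₀ (M₀ := ℝ) one_le_two (n := d)]

theorem Finset.eq_of_sum_two_pow_sub_eq {M : ℕ} {s s' : Finset ℕ} (hs : s ⊆ Finset.range M)
    (hs' : s' ⊆ Finset.range M) (h : ∑ j ∈ s, 2 ^ (M - 1 - j) = ∑ j ∈ s', 2 ^ (M - 1 - j)) :
    s = s' := by
  have hinv : ∀ t ⊆ Finset.range M, (t.image (M - 1 - ·)).image (M - 1 - ·) = t := by
    intro t ht
    rw [Finset.image_image]
    refine (Finset.image_congr fun j hj => ?_).trans Finset.image_id'
    have := Finset.mem_range.1 (ht hj)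
    simp only [Function.comp_apply]
    omega
  have hsum : ∀ t ⊆ Finset.range M,
      ∑ j ∈ t, 2 ^ (M - 1 - j) = ∑ k ∈ t.image (M - 1 - ·), 2 ^ k := by
    intro t ht
    rw [Finset.sum_image fun i hi j hj hij => ?_]
    have := Finset.mem_range.1 (ht hi)
    have := Finset.mem_range.1 (ht hj)
    omega
  rw [hsum s hs, hsum s' hs'] at h
  rw [← hinv s hs, ← hinv s' hs', Finset.geomSum_injective le_rfl h]

theorem Nat.count_le_count_add_sub (p : ℕ → Prop) [DecidablePred p] (m n : ℕ) :
    Nat.count p m ≤ Nat.count p n + (m - n) := by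
  rcases le_total m n with h | h
  · exact (Nat.count_monotone p h).trans (Nat.le_add_right _ _)
  · obtain ⟨k, rfl⟩ := Nat.exists_eq_add_of_le h
    rw [Nat.count_add, Nat.add_sub_cancel_left]
    exact Nat.add_le_add_left (Nat.count_le _) _

theorem Nat.count_le_count_sub_one_add_one (p : ℕ → Prop) [DecidablePred p] (m : ℕ) :
    Nat.count p m ≤ Nat.count p (m - 1) + 1 :=
  (Nat.count_le_count_add_sub p m (m - 1)).trans (by omega)

theorem exists_nat_lt_le_add_one {x : ℝ} (hx : 0 < x) : ∃ M : ℕ, (M : ℝ) < x ∧ x ≤ M + 1 := by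
  refine ⟨⌈x⌉₊ - 1, ?_, ?_⟩ <;>
    rw [Nat.cast_sub (Nat.one_le_iff_ne_zero.2 (Nat.ceil_pos.2 hx).ne'), Nat.cast_one]
  · linarith [Nat.ceil_lt_add_one hx.le]
  · linarith [Nat.le_ceil x]

theorem eventually_nhdsGT_zero_of_two_rpow {P : ℝ → Prop}
    (h : ∀ᶠ x : ℝ in atTop, P ((2 : ℝ) ^ (-x))) : ∀ᶠ δ in 𝓝[>] 0, P δ := by
  have hlog : Tendsto (fun δ => -Real.logb 2 δ) (𝓝[>] 0) atTop :=
    tendsto_neg_atBot_atTop.comp (Real.tendsto_logb_nhdsGT_zero one_lt_two)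
  filter_upwards [hlog.eventually h, self_mem_nhdsWithin] with δ hδ (hδ0 : 0 < δ)
  rwa [neg_neg, Real.rpow_logb two_pos (by norm_num) hδ0] at hδ

theorem frequently_nhdsGT_zero_of_two_rpow {P : ℝ → Prop}
    (h : ∃ᶠ x : ℝ in atTop, P ((2 : ℝ) ^ (-x))) : ∃ᶠ δ in 𝓝[>] 0, P δ :=
  (tendsto_nhdsWithin_iff.2 ⟨(tendsto_rpow_atBot_of_base_gt_one 2 one_lt_two).comp
    tendsto_neg_atTop_atBot, .of_forall fun x => Real.rpow_pos_of_pos two_pos (-x)⟩).frequently h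

theorem Filter.liminf_eq_of_forall_pos {α : Type*} {l : Filter α} [l.NeBot] {f : α → ℝ} {L : ℝ}
    (hle : ∀ ε > 0, ∀ᶠ a in l, L - ε ≤ f a) (hge : ∀ ε > 0, ∃ᶠ a in l, f a ≤ L + ε)
    (hbdd : IsBoundedUnder (· ≤ ·) l f) : liminf f l = L := by
  refine le_antisymm (le_of_forall_pos_le_add fun ε hε => liminf_le_of_frequently_le (hge ε hε)
    (isBoundedUnder_of_eventually_ge (hle 1 one_pos))) (le_of_forall_pos_le_add fun ε hε => ?_)
  linarith [le_liminf_of_le hbdd.isCoboundedUnder_ge (hle ε hε)]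

theorem Filter.limsup_eq_of_forall_pos {α : Type*} {l : Filter α} [l.NeBot] {f : α → ℝ} {L : ℝ}
    (hle : ∀ ε > 0, ∀ᶠ a in l, f a ≤ L + ε) (hge : ∀ ε > 0, ∃ᶠ a in l, L - ε ≤ f a)
    (hbdd : IsBoundedUnder (· ≥ ·) l f) : limsup f l = L := by
  refine le_antisymm (le_of_forall_pos_le_add fun ε hε => ?_)
    (le_of_forall_pos_le_add fun ε hε => ?_)
  · exact limsup_le_of_le hbdd.isCoboundedUnder_le (hle ε hε)
  · linarith [le_limsup_of_frequently_le (hge ε hε)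
      (isBoundedUnder_of_eventually_le (hle 1 one_pos))]

theorem StrictMono.exists_le_lt_succ {f : ℕ → ℕ} (hf : StrictMono f) {m : ℕ} (hm : f 0 ≤ m) :
    ∃ k, f k ≤ m ∧ m < f (k + 1) := by
  have hex : ∃ k, m < f (k + 1) := ⟨m, (Nat.lt_succ_self m).trans_le (hf.le_apply)⟩
  refine ⟨Nat.find hex, ?_, Nat.find_spec hex⟩
  rcases h : Nat.find hex with _ | k
  · exact hm
  · exact not_lt.1 (Nat.find_min hex (h ▸ Nat.lt_succ_self k))

namespace Condensation

section Digits

def digitSeqs (S : Set ℕ) : Set (ℕ → Fin 2) := {a | ∀ j, a j ≠ 0 → j ∈ S}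

def digitSet (S : Set ℕ) : Set ℝ := Real.ofDigits '' digitSeqs S

def digitProd (d : ℕ) (S : Set ℕ) : Set (EuclideanSpace ℝ (Fin d)) :=
  {x | ∀ i, x i ∈ digitSet S}

def indicatorDigits (s : Finset ℕ) (j : ℕ) : Fin 2 := if j ∈ s then 1 else 0

variable (S : Set ℕ)

theorem isClosed_digitSeqs : IsClosed (digitSeqs S) := by
  have : digitSeqs S = ⋂ j ∈ Sᶜ, {a : ℕ → Fin 2 | a j = 0} := by
    ext a; simp [digitSeqs, not_imp_comm]
  rw [this]
  exact isClosed_biInter fun j _ => isClosed_eq (continuous_apply j) continuous_const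

theorem isCompact_digitSet : IsCompact (digitSet S) :=
  (isClosed_digitSeqs S).isCompact.image Real.continuous_ofDigits

theorem digitSet_subset_Icc : digitSet S ⊆ Icc 0 1 := by
  rintro _ ⟨a, -, rfl⟩
  exact ⟨Real.ofDigits_nonneg a, Real.ofDigits_le_one a⟩

theorem digitProd_subset_cube (d : ℕ) :
    digitProd d S ⊆ {x : EuclideanSpace ℝ (Fin d) | ∀ i, x i ∈ Icc (0 : ℝ) 1} :=
  fun _ hx i => digitSet_subset_Icc S (hx i)

theorem isCompact_digitProd (d : ℕ) : IsCompact (digitProd d S) := by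
  have : digitProd d S = WithLp.toLp 2 '' univ.pi fun _ => digitSet S := by
    ext x
    refine ⟨fun hx => ⟨WithLp.ofLp x, fun i _ => hx i, rfl⟩, ?_⟩
    rintro ⟨y, hy, rfl⟩ i
    exact hy i trivial
  rw [this]
  exact (isCompact_univ_pi fun _ => isCompact_digitSet S).image (PiLp.continuous_toLp 2 _)

variable {S}

theorem indicatorDigits_mem_digitSeqs {s : Finset ℕ} (hs : ↑s ⊆ S) :
    indicatorDigits s ∈ digitSeqs S := by
  intro j hj
  by_contra h
  exact hj (if_neg fun h' => h (hs h'))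

theorem ofDigits_indicatorDigits {M : ℕ} {s : Finset ℕ} (hs : s ⊆ Finset.range M) :
    Real.ofDigits (indicatorDigits s) = ∑ j ∈ s, ((2 : ℝ) ^ (j + 1))⁻¹ := by
  have htail : (fun i => indicatorDigits s (i + M)) = fun _ => 0 := by
    funext i
    refine if_neg fun hi => ?_
    have := Finset.mem_range.1 (hs hi)
    omega
  rw [Real.ofDigits_eq_sum_add_ofDigits _ M, htail, ← Finset.sum_subset hs]
  · simp only [Real.ofDigits, Real.ofDigitsTerm, Fin.val_zero, Nat.cast_zero, zero_mul, tsum_zero,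
      mul_zero, add_zero]
    exact Finset.sum_congr rfl fun j hj => by simp [indicatorDigits, hj]
  · intro j _ hj
    simp [Real.ofDigitsTerm, indicatorDigits, hj]

theorem two_pow_mul_ofDigits_indicatorDigits {M : ℕ} {s : Finset ℕ} (hs : s ⊆ Finset.range M) :
    (2 : ℝ) ^ M * Real.ofDigits (indicatorDigits s) = ((∑ j ∈ s, 2 ^ (M - 1 - j) : ℕ) : ℝ) := by
  rw [ofDigits_indicatorDigits hs, Finset.mul_sum]
  push_cast
  refine Finset.sum_congr rfl fun j hj => ?_
  have hM : M = (M - 1 - j) + (j + 1) := by have := Finset.mem_range.1 (hs hj); omega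
  rw [hM, pow_add, mul_assoc, mul_inv_cancel₀ (by positivity), mul_one, ← hM]

theorem inv_two_pow_le_abs_sub_ofDigits_indicatorDigits {M : ℕ} {s s' : Finset ℕ}
    (hs : s ⊆ Finset.range M) (hs' : s' ⊆ Finset.range M) (hne : s ≠ s') :
    ((2 : ℝ) ^ M)⁻¹ ≤
      |Real.ofDigits (indicatorDigits s) - Real.ofDigits (indicatorDigits s')| := by
  have hnat := (Nat.cast_injective (R := ℤ)).ne
    (mt (Finset.eq_of_sum_two_pow_sub_eq hs hs') hne)
  have h1 : (1 : ℝ) ≤ |((∑ j ∈ s, 2 ^ (M - 1 - j) : ℕ) : ℝ) - (∑ j ∈ s', 2 ^ (M - 1 - j) : ℕ)| := by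
    exact_mod_cast Int.one_le_abs (sub_ne_zero.2 hnat)
  rw [← two_pow_mul_ofDigits_indicatorDigits hs, ← two_pow_mul_ofDigits_indicatorDigits hs',
    ← mul_sub, abs_mul, abs_of_pos (by positivity)] at h1
  rwa [inv_le_iff_one_le_mul₀ (by positivity), mul_comm]

end Digits

section DigitProdCovering

variable {d : ℕ} {S : Set ℕ}

abbrev DigitPattern (d : ℕ) (S : Set ℕ) (M : ℕ) : Type :=
  Fin d → ((Finset.range M).filter (· ∈ S)).powerset

theorem card_digitPattern (M : ℕ) :
    Fintype.card (DigitPattern d S M) = 2 ^ (d * Nat.count (· ∈ S) M) := by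
  rw [Fintype.card_fun, Fintype.card_coe, Finset.card_powerset, ← Nat.count_eq_card_filter_range,
    Fintype.card_fin, ← pow_mul, mul_comm]

theorem exists_cover_digitProd (M : ℕ) :
    ∃ U : DigitPattern d S M → Set (EuclideanSpace ℝ (Fin d)),
      (∀ σ, ediam (U σ) ≤ ENNReal.ofReal (√d * ((2 : ℝ) ^ M)⁻¹)) ∧ digitProd d S ⊆ ⋃ σ, U σ := by
  refine ⟨fun σ => {x | ∀ i, ∃ a, Real.ofDigits a = x i ∧
    ∀ j < M, a j = indicatorDigits (σ i) j}, fun σ => ediam_le fun x hx y hy => ?_, fun x hx => ?_⟩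
  · rw [edist_le_ofReal (by positivity)]
    refine EuclideanSpace.dist_le_sqrt_mul (by positivity) fun i => ?_
    obtain ⟨a, hax, ha⟩ := hx i
    obtain ⟨a', hay, ha'⟩ := hy i
    rw [Real.dist_eq, ← hax, ← hay]
    exact_mod_cast Real.abs_ofDigits_sub_ofDigits_le fun j hj => (ha j hj).trans (ha' j hj).symm
  · choose a ha hax using hx
    refine mem_iUnion.2 ⟨fun i => ⟨((Finset.range M).filter (· ∈ S)).filter (a i · ≠ 0),
      Finset.mem_powerset.2 (Finset.filter_subset _ _)⟩, fun i => ⟨a i, hax i, fun j hj => ?_⟩⟩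
    by_cases h0 : a i j = 0
    · simp [indicatorDigits, h0]
    · have : a i j = 1 := by omega
      simp [indicatorDigits, this, hj, ha i j h0]

theorem coverN_digitProd_le {M : ℕ} {δ : ℝ} (hδ : √d * ((2 : ℝ) ^ M)⁻¹ ≤ δ) :
    coverN (digitProd d S) δ ≤ 2 ^ (d * Nat.count (· ∈ S) M) := by
  obtain ⟨U, hU, hcov⟩ := exists_cover_digitProd (d := d) (S := S) M
  rw [← card_digitPattern]
  exact coverN_le_card U (fun σ => (hU σ).trans (ENNReal.ofReal_le_ofReal hδ)) hcov

theorem le_coverN_digitProd {M : ℕ} {δ : ℝ} (hδ : 0 < δ) (hδM : δ < ((2 : ℝ) ^ M)⁻¹) :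
    2 ^ (d * Nat.count (· ∈ S) M) ≤ coverN (digitProd d S) δ := by
  obtain ⟨M', hM'⟩ := exists_nat_gt (√d / δ)
  have hfine : √d * ((2 : ℝ) ^ M')⁻¹ ≤ δ := by
    have : (M' : ℝ) < 2 ^ M' := by exact_mod_cast Nat.lt_two_pow_self
    rw [div_lt_iff₀ hδ] at hM'
    rw [← div_eq_mul_inv, div_le_iff₀ (by positivity)]
    nlinarith
  obtain ⟨U, hU, hcov⟩ := exists_cover_digitProd (d := d) (S := S) M'
  rw [← card_digitPattern]
  refine card_le_coverN hδ.le hδM U (fun σ => (hU σ).trans (ENNReal.ofReal_le_ofReal hfine)) hcov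
    (fun σ => WithLp.toLp 2 fun i => Real.ofDigits (indicatorDigits (σ i)))
    (fun σ i => ⟨_, indicatorDigits_mem_digitSeqs fun j hj => ?_, rfl⟩) fun σ τ hστ => ?_
  · exact (Finset.mem_filter.1 (Finset.mem_powerset.1 (σ i).2 hj)).2
  · obtain ⟨i, hi⟩ := Function.ne_iff.1 hστ
    have hsub : ∀ s : ((Finset.range M).filter (· ∈ S)).powerset, (s : Finset ℕ) ⊆ Finset.range M :=
      fun s => (Finset.mem_powerset.1 s.2).trans (Finset.filter_subset _ _)
    refine (inv_two_pow_le_abs_sub_ofDigits_indicatorDigits (hsub _) (hsub _)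
      (Subtype.coe_injective.ne hi)).trans ?_
    rw [← Real.dist_eq]
    exact PiLp.dist_apply_le (WithLp.toLp 2 fun i => Real.ofDigits (indicatorDigits (σ i)))
      (WithLp.toLp 2 fun i => Real.ofDigits (indicatorDigits (τ i))) i

end DigitProdCovering

section DyadicScales

variable {d : ℕ} {S : Set ℕ}

theorem two_pow_count_le_coverN {x : ℝ} {M : ℕ} (hM : (M : ℝ) < x) :
    (2 : ℝ) ^ (d * Nat.count (· ∈ S) M) ≤ coverN (digitProd d S) ((2 : ℝ) ^ (-x)) := by
  have h : (2 : ℝ) ^ (-x) < ((2 : ℝ) ^ M)⁻¹ := by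
    rw [← Real.rpow_natCast, ← Real.rpow_neg two_pos.le]
    exact Real.rpow_lt_rpow_of_exponent_lt one_lt_two (neg_lt_neg hM)
  exact_mod_cast le_coverN_digitProd (Real.rpow_pos_of_pos two_pos _) h

theorem coverN_le_two_pow_count {x : ℝ} {M : ℕ} (hM : x + d ≤ M) :
    (coverN (digitProd d S) ((2 : ℝ) ^ (-x)) : ℝ) ≤ 2 ^ (d * Nat.count (· ∈ S) M) := by
  have h : √d * ((2 : ℝ) ^ M)⁻¹ ≤ (2 : ℝ) ^ (-x) := by
    calc √d * ((2 : ℝ) ^ M)⁻¹ ≤ 2 ^ d * ((2 : ℝ) ^ M)⁻¹ := by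
          gcongr; exact Real.sqrt_natCast_le_two_pow d
      _ = (2 : ℝ) ^ ((d : ℝ) + -M) := by
          rw [Real.rpow_add two_pos, Real.rpow_neg two_pos.le, Real.rpow_natCast,
            Real.rpow_natCast]
      _ ≤ (2 : ℝ) ^ (-x) := Real.rpow_le_rpow_of_exponent_le one_le_two (by linarith)
  exact_mod_cast coverN_digitProd_le h

theorem le_logb_coverN {x : ℝ} {M : ℕ} (hM : (M : ℝ) < x) :
    (d : ℝ) * Nat.count (· ∈ S) M ≤ Real.logb 2 (coverN (digitProd d S) ((2 : ℝ) ^ (-x))) := by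
  have h := two_pow_count_le_coverN (S := S) (d := d) hM
  rw [Real.le_logb_iff_rpow_le one_lt_two ((by positivity : (0 : ℝ) < 2 ^ _).trans_le h)]
  exact_mod_cast h

theorem logb_coverN_le {x : ℝ} {M : ℕ} (hM : x + d ≤ M) :
    Real.logb 2 (coverN (digitProd d S) ((2 : ℝ) ^ (-x))) ≤ (d : ℝ) * Nat.count (· ∈ S) M := by
  have h := coverN_le_two_pow_count (S := S) hM
  rcases (Nat.cast_nonneg (α := ℝ) (coverN (digitProd d S) ((2 : ℝ) ^ (-x)))).eq_or_lt with h0 | h0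
  · rw [← h0, Real.logb_zero]; positivity
  · rw [Real.logb_le_iff_le_rpow one_lt_two h0]
    exact_mod_cast h

end DyadicScales

section DimensionBounds

variable {d : ℕ} {S : Set ℕ} {ε : ℝ}

theorem eventually_le_dimRatio {b c : ℝ} (hb : 0 ≤ b)
    (h : ∀ m : ℕ, b * m ≤ d * Nat.count (· ∈ S) m + c) (hε : 0 < ε) :
    ∀ᶠ δ in 𝓝[>] 0, b - ε ≤ dimRatio (digitProd d S) δ := by
  refine eventually_nhdsGT_zero_of_two_rpow ?_
  filter_upwards [eventually_gt_atTop 0, eventually_ge_atTop ((b + c) / ε)] with x hx hxε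
  obtain ⟨M, hMx, hxM⟩ := exists_nat_lt_le_add_one hx
  rw [dimRatio_two_rpow, le_div_iff₀ hx]
  rw [div_le_iff₀ hε] at hxε
  nlinarith [le_logb_coverN (d := d) (S := S) hMx, h M, mul_le_mul_of_nonneg_left hxM hb]

theorem eventually_dimRatio_le {B c : ℝ} (hB : 0 ≤ B)
    (h : ∀ m : ℕ, d * Nat.count (· ∈ S) m ≤ B * m + c) (hε : 0 < ε) :
    ∀ᶠ δ in 𝓝[>] 0, dimRatio (digitProd d S) δ ≤ B + ε := by
  refine eventually_nhdsGT_zero_of_two_rpow ?_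
  filter_upwards [eventually_gt_atTop 0, eventually_ge_atTop ((B * (1 + d) + c) / ε)]
    with x hx hxε
  have hM : x + d ≤ ((⌈x⌉₊ + d : ℕ) : ℝ) := by push_cast; linarith [Nat.le_ceil x]
  have hM' : ((⌈x⌉₊ + d : ℕ) : ℝ) ≤ x + 1 + d := by
    push_cast; linarith [Nat.ceil_lt_add_one hx.le]
  rw [dimRatio_two_rpow, div_le_iff₀ hx]
  rw [div_le_iff₀ hε] at hxε
  nlinarith [logb_coverN_le (S := S) hM, h (⌈x⌉₊ + d), mul_le_mul_of_nonneg_left hM' hB]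

theorem frequently_dimRatio_le {b : ℝ}
    (h : ∃ᶠ U : ℕ in atTop, d * Nat.count (· ∈ S) U ≤ b * U) (hε : 0 < ε) :
    ∃ᶠ δ in 𝓝[>] 0, dimRatio (digitProd d S) δ ≤ b + ε := by
  refine frequently_nhdsGT_zero_of_two_rpow (tendsto_natCast_atTop_atTop.frequently ?_)
  refine (h.and_eventually (eventually_ge_atTop ⌈max 1 (d ^ 2 / ε)⌉₊)).mono
    fun U ⟨hU, hUK⟩ => ?_
  have hUK' : max 1 ((d : ℝ) ^ 2 / ε) ≤ U := Nat.ceil_le.1 hUK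
  have hU0 : (0 : ℝ) < U := one_pos.trans_le ((le_max_left _ _).trans hUK')
  have hdU : (d : ℝ) ^ 2 ≤ ε * U := by
    rw [← div_le_iff₀' hε]; exact (le_max_right _ _).trans hUK'
  have hcount : (Nat.count (· ∈ S) (U + d) : ℝ) ≤ Nat.count (· ∈ S) U + d := by
    have := Nat.count_le_count_add_sub (· ∈ S) (U + d) U
    rw [Nat.add_sub_cancel_left] at this
    exact_mod_cast this
  rw [dimRatio_two_rpow, div_le_iff₀ hU0]
  have hlog := logb_coverN_le (d := d) (S := S) (x := U) (M := U + d) (by push_cast; rfl)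
  nlinarith [mul_le_mul_of_nonneg_left hcount (Nat.cast_nonneg (α := ℝ) d)]

theorem frequently_le_dimRatio {B : ℝ}
    (h : ∀ ε > 0, ∃ᶠ V : ℕ in atTop, (B - ε) * V ≤ d * Nat.count (· ∈ S) V) (hε : 0 < ε) :
    ∃ᶠ δ in 𝓝[>] 0, B - ε ≤ dimRatio (digitProd d S) δ := by
  refine frequently_nhdsGT_zero_of_two_rpow (tendsto_natCast_atTop_atTop.frequently ?_)
  refine ((h (ε / 2) (half_pos hε)).and_eventually
    (eventually_ge_atTop ⌈max 1 (2 * d / ε)⌉₊)).mono fun V ⟨hV, hVK⟩ => ?_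
  have hVK' : max 1 (2 * d / ε) ≤ (V : ℝ) := Nat.ceil_le.1 hVK
  have hV1 : 1 ≤ V := by exact_mod_cast (le_max_left _ _).trans hVK'
  have hdV : 2 * (d : ℝ) ≤ ε * V := by
    rw [← div_le_iff₀' hε]; exact (le_max_right _ _).trans hVK'
  have hcount : (Nat.count (· ∈ S) V : ℝ) ≤ Nat.count (· ∈ S) (V - 1) + 1 := by
    exact_mod_cast Nat.count_le_count_sub_one_add_one _ V
  have hM : ((V - 1 : ℕ) : ℝ) < V := by rw [Nat.cast_sub hV1]; simp
  have hV0 : (0 : ℝ) < V := by exact_mod_cast hV1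
  rw [dimRatio_two_rpow, le_div_iff₀ hV0]
  nlinarith [le_logb_coverN (d := d) (S := S) hM,
    mul_le_mul_of_nonneg_left hcount (Nat.cast_nonneg (α := ℝ) d)]

end DimensionBounds

def extremalExponent (d : ℕ) (b t : ℝ) : ℝ := b / t * ((d - t) / (d - b))

section ExtremalExponent

variable {d : ℕ} {b t : ℝ}

theorem extremalExponent_mul (ht : t ≠ 0) (hbd : b < d) :
    extremalExponent d b t * (t * (d - b)) = b * (d - t) := by
  rw [extremalExponent]
  field_simp [sub_ne_zero.2 hbd.ne']

theorem extremalExponent_pos (hb : 0 < b) (hbt : b < t) (htd : t < d) :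
    0 < extremalExponent d b t := by
  have : 0 < t := hb.trans hbt
  unfold extremalExponent
  exact mul_pos (div_pos hb this) (div_pos (by linarith) (by linarith))

theorem extremalExponent_le_one (hb : 0 < b) (hbt : b < t) (htd : t < d) :
    extremalExponent d b t ≤ 1 := by
  have : 0 < t := hb.trans hbt
  unfold extremalExponent
  exact mul_le_one₀ ((div_le_one this).2 hbt.le) (div_nonneg (by linarith) (by linarith))
    ((div_le_one (by linarith)).2 (by linarith))

end ExtremalExponent

section RegularityBounds

variable {d : ℕ} {S : Set ℕ} {t ε : ℝ}

theorem le_cre_digitProd {x : ℝ} {m : ℕ} (hx : 0 < x) (hm : 0 < m) (hmx : (m : ℝ) ≤ x)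
    (h : t * m + d ≤ d * Nat.count (· ∈ S) m) :
    m / x ≤ cre (digitProd d S) t ((2 : ℝ) ^ (-x)) := by
  have hcount : (Nat.count (· ∈ S) m : ℝ) ≤ Nat.count (· ∈ S) (m - 1) + 1 := by
    exact_mod_cast Nat.count_le_count_sub_one_add_one _ m
  have hM : ((m - 1 : ℕ) : ℝ) < m := by rw [Nat.cast_sub hm]; simp
  refine le_csSup ⟨1, fun _ hp => hp.2.1⟩ ⟨by positivity, (div_le_one hx).2 hmx, ?_⟩
  rw [← Real.rpow_mul two_pos.le, ← Real.rpow_mul two_pos.le,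
    show -x * (m / x) = -(m : ℝ) by field_simp, show -x * -(m / x * t) = m * t by field_simp]
  calc (2 : ℝ) ^ (m * t) ≤ (2 : ℝ) ^ ((d * Nat.count (· ∈ S) (m - 1) : ℕ) : ℝ) :=
        Real.rpow_le_rpow_of_exponent_le one_le_two (by
          push_cast; nlinarith [mul_le_mul_of_nonneg_left hcount (Nat.cast_nonneg (α := ℝ) d)])
    _ ≤ _ := by rw [Real.rpow_natCast]; exact two_pow_count_le_coverN hM

theorem cre_digitProd_le {x q : ℝ} (hx : 0 < x) (hq : 0 ≤ q)
    (h : ∀ y : ℝ, q * x < y → y ≤ x → d * Nat.count (· ∈ S) (⌈y⌉₊ + d) < t * y) :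
    cre (digitProd d S) t ((2 : ℝ) ^ (-x)) ≤ q := by
  refine Real.sSup_le (fun p ⟨_, hp1, hp⟩ => not_lt.1 fun hqp => ?_) hq
  rw [← Real.rpow_mul two_pos.le, ← Real.rpow_mul two_pos.le, show -x * p = -(p * x) by ring,
    show -x * -(p * t) = t * (p * x) by ring] at hp
  have hcov := coverN_le_two_pow_count (d := d) (S := S) (x := p * x) (M := ⌈p * x⌉₊ + d)
    (by push_cast; linarith [Nat.le_ceil (p * x)])
  have hpow : (2 : ℝ) ^ (t * (p * x)) ≤
      (2 : ℝ) ^ ((d * Nat.count (· ∈ S) (⌈p * x⌉₊ + d) : ℕ) : ℝ) := by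
    rw [Real.rpow_natCast]; exact hp.trans hcov
  rw [Real.rpow_le_rpow_left_iff one_lt_two] at hpow
  push_cast at hpow
  linarith [h (p * x) (mul_lt_mul_of_pos_right hqp hx) (by nlinarith)]

theorem eventually_le_cre_digitProd {q : ℝ} (hq : q ≤ 1) (hε : 0 < ε)
    (h : ∀ᶠ n : ℕ in atTop, ∃ m : ℕ, 0 < m ∧ m ≤ n ∧ q * n ≤ m ∧
      t * m + d ≤ d * Nat.count (· ∈ S) m) :
    ∀ᶠ δ in 𝓝[>] 0, q - ε ≤ cre (digitProd d S) t δ := by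
  refine eventually_nhdsGT_zero_of_two_rpow ?_
  obtain ⟨N, hN⟩ := eventually_atTop.1 h
  filter_upwards [eventually_ge_atTop (N : ℝ), eventually_ge_atTop 1,
    eventually_ge_atTop (1 / ε)] with x hxN hx1 hxε
  rw [div_le_iff₀ hε] at hxε
  have hx : 0 < x := one_pos.trans_le hx1
  obtain ⟨m, hm, hmn, hqm, hcount⟩ := hN ⌊x⌋₊ (Nat.le_floor hxN)
  have hmx : (m : ℝ) ≤ x := (Nat.cast_le.2 hmn).trans (Nat.floor_le hx.le)
  refine le_trans ?_ (le_cre_digitProd hx hm hmx hcount)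
  rw [le_div_iff₀ hx]
  have hfloor := Nat.floor_le hx.le
  have hfloor' := Nat.sub_one_lt_floor x
  rcases le_or_gt 0 q with hq0 | hq0 <;> nlinarith

/-- `count` grows with slope at most `1`, so once the density `d * count m / m` has dipped to `b`
at `U`, it stays below `t` on the scales from `b U / t` to about `(d - b) U / (d - t)`; for large
`U` this range contains `[b U / t, b U / (t (P + ε)) + 1]`, `P` the extremal exponent. -/
theorem count_lt_of_count_le {b : ℝ} (hb : 0 < b) (hbt : b < t) (htd : t < d) (hε : 0 < ε)
    {U : ℕ} (hU : d * Nat.count (· ∈ S) U ≤ b * U)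
    (hUε : (extremalExponent d b t + ε) * (d - t + d * (d + 1)) ≤ (d - b) * ε * U) {y : ℝ}
    (hy₁ : b * U < t * y) (hy₂ : t * (extremalExponent d b t + ε) * (y - 1) < b * U) :
    d * Nat.count (· ∈ S) (⌈y⌉₊ + d) < t * y := by
  set P := extremalExponent d b t
  have ht : 0 < t := hb.trans hbt
  have hd : (0 : ℝ) < d := ht.trans htd
  have hPt := extremalExponent_mul ht.ne' (hbt.trans htd)
  have htQ : 0 < t * (P + ε) := by have := extremalExponent_pos hb hbt htd; positivity
  have hc := Nat.count_le_count_add_sub (· ∈ S) (⌈y⌉₊ + d) U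
  rcases le_or_gt (⌈y⌉₊ + d) U with hle | hlt
  · rw [Nat.sub_eq_zero_of_le hle, add_zero] at hc
    calc (d : ℝ) * Nat.count (· ∈ S) (⌈y⌉₊ + d) ≤ d * Nat.count (· ∈ S) U := by gcongr
      _ < t * y := hU.trans_lt hy₁
  have hc' : (Nat.count (· ∈ S) (⌈y⌉₊ + d) : ℝ) ≤ Nat.count (· ∈ S) U + (⌈y⌉₊ + d - U) := by
    have := Nat.cast_le (α := ℝ) |>.2 hc
    rwa [Nat.cast_add, Nat.cast_sub hlt.le, Nat.cast_add] at this
  have hceil := Nat.ceil_lt_add_one (nonneg_of_mul_nonneg_right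
    ((by positivity : (0 : ℝ) ≤ b * U).trans hy₁.le) ht)
  have hcross : (d - t) * y ≤ (d - b) * U - d * (d + 1) := by
    refine le_of_mul_le_mul_left ?_ htQ
    nlinarith
  nlinarith [mul_le_mul_of_nonneg_left hc' hd.le]

theorem frequently_forall_count_lt {b : ℝ}
    (hS : ∃ᶠ U : ℕ in atTop, d * Nat.count (· ∈ S) U ≤ b * U) (hb : 0 < b) (hbt : b < t)
    (htd : t < d) (hε : 0 < ε) :
    ∃ᶠ n : ℕ in atTop, ∀ y : ℝ, (extremalExponent d b t + ε) * n < y → y ≤ n →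
      d * Nat.count (· ∈ S) (⌈y⌉₊ + d) < t * y := by
  set P := extremalExponent d b t
  have htQ : 0 < t * (P + ε) := by
    have := extremalExponent_pos hb hbt htd; have := hb.trans hbt; positivity
  refine frequently_atTop.2 fun N => ?_
  obtain ⟨U, hUK, hU⟩ := frequently_atTop.1 hS
    ⌈max (N * (t * (P + ε)) / b) ((P + ε) * (d - t + d * (d + 1)) / ((d - b) * ε))⌉₊
  have hUK' := Nat.ceil_le.1 hUK
  have hUN : N * (t * (P + ε)) ≤ b * U := by
    rw [← div_le_iff₀' hb]; exact (le_max_left _ _).trans hUK'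
  have hUε : (P + ε) * (d - t + d * (d + 1)) ≤ (d - b) * ε * U := by
    rw [← div_le_iff₀' (mul_pos (sub_pos.2 (hbt.trans htd)) hε)]
    exact (le_max_right _ _).trans hUK'
  set n := ⌈b * U / (t * (P + ε))⌉₊
  have hn₁ : b * U ≤ t * (P + ε) * n := by
    rw [← div_le_iff₀' htQ]; exact Nat.le_ceil _
  have hn₂ : t * (P + ε) * (n - 1) < b * U := by
    have := Nat.ceil_lt_add_one (by positivity : 0 ≤ b * U / (t * (P + ε)))
    rwa [← sub_lt_iff_lt_add, lt_div_iff₀' htQ] at this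
  refine ⟨n, ?_, fun y hy hyn => count_lt_of_count_le hb hbt htd hε hU hUε ?_ ?_⟩
  · exact_mod_cast le_of_mul_le_mul_right (hUN.trans (hn₁.trans_eq (mul_comm _ _))) htQ
  · nlinarith
  · nlinarith

theorem frequently_cre_digitProd_le {b : ℝ}
    (hS : ∃ᶠ U : ℕ in atTop, d * Nat.count (· ∈ S) U ≤ b * U) (hb : 0 < b) (hbt : b < t)
    (htd : t < d) (hε : 0 < ε) :
    ∃ᶠ δ in 𝓝[>] 0, cre (digitProd d S) t δ ≤ extremalExponent d b t + ε := by
  refine frequently_nhdsGT_zero_of_two_rpow (tendsto_natCast_atTop_atTop.frequently ?_)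
  refine ((frequently_forall_count_lt hS hb hbt htd hε).and_eventually
    (eventually_gt_atTop 0)).mono fun n ⟨hn, hn0⟩ => ?_
  exact cre_digitProd_le (Nat.cast_pos.2 hn0)
    ((extremalExponent_pos hb hbt htd).le.trans (le_add_of_nonneg_right hε.le)) hn

end RegularityBounds

section Construction

variable (d : ℕ) (b B : ℝ)

/-- Strictly below `B`, since for `B = d` no block of finite length reaches density `B`. -/
def level (k : ℕ) : ℝ := B - (B - b) / (k + 2)

/-- `riseData k = (u, c)`: the `k`-th block of free digits starts at `u` and has `c` free digits
below it. The block is just long enough to push the density `d * count m / m` up to `level k`;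
the next block starts once the density has dropped back to `b`. -/
def riseData : ℕ → ℕ × ℕ
  | 0 => (1, 0)
  | k + 1 =>
    let c := (riseData k).2 +
      ⌈(level b B k * (riseData k).1 - d * (riseData k).2) / (d - level b B k)⌉₊
    (⌈d * c / b⌉₊, c)

def riseStart (k : ℕ) : ℕ := (riseData d b B k).1

def riseStartCount (k : ℕ) : ℕ := (riseData d b B k).2

def riseLength (k : ℕ) : ℕ :=
  ⌈(level b B k * riseStart d b B k - d * riseStartCount d b B k) / (d - level b B k)⌉₊

def riseEnd (k : ℕ) : ℕ := riseStart d b B k + riseLength d b B k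

def freeDigits : Set ℕ := {j | ∃ k, riseStart d b B k ≤ j ∧ j < riseEnd d b B k}

theorem riseStart_zero : riseStart d b B 0 = 1 := rfl

theorem riseStartCount_zero : riseStartCount d b B 0 = 0 := rfl

theorem riseStartCount_succ (k : ℕ) :
    riseStartCount d b B (k + 1) = riseStartCount d b B k + riseLength d b B k := rfl

theorem riseStart_succ (k : ℕ) :
    riseStart d b B (k + 1) = ⌈d * riseStartCount d b B (k + 1) / b⌉₊ := rfl

variable {d b B}

theorem b_lt_level (hbB : b < B) (k : ℕ) : b < level b B k := by
  have : (B - b) / (k + 2) < B - b :=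
    div_lt_self (sub_pos.2 hbB) (by linarith [(Nat.cast_nonneg k : (0 : ℝ) ≤ k)])
  unfold level; linarith

theorem level_lt (hbB : b < B) (k : ℕ) : level b B k < B := by
  have : 0 < (B - b) / (k + 2) := div_pos (sub_pos.2 hbB) (by positivity)
  unfold level; linarith

theorem tendsto_level : Tendsto (level b B) atTop (𝓝 B) := by
  have h : Tendsto (fun k : ℕ => (B - b) / ((k : ℝ) + 2)) atTop (𝓝 0) :=
    tendsto_const_nhds.div_atTop (tendsto_atTop_add_const_right _ 2 tendsto_natCast_atTop_atTop)
  have := tendsto_const_nhds (x := B).sub h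
  rwa [sub_zero] at this

theorem d_mul_riseStartCount_le (hb : 0 < b) :
    ∀ k, (d : ℝ) * riseStartCount d b B k ≤ b * riseStart d b B k
  | 0 => by simp [riseStartCount_zero, riseStart_zero, hb.le]
  | k + 1 => by
    rw [riseStart_succ, mul_comm b, ← div_le_iff₀ hb]
    exact Nat.le_ceil _

theorem b_mul_riseStart_le (hb : 0 < b) :
    ∀ k, b * riseStart d b B k ≤ d * riseStartCount d b B k + b
  | 0 => by simp [riseStartCount_zero, riseStart_zero]
  | k + 1 => by
    have := Nat.ceil_lt_add_one (by positivity : 0 ≤ (d : ℝ) * riseStartCount d b B (k + 1) / b)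
    rw [← riseStart_succ, ← sub_lt_iff_lt_add, lt_div_iff₀ hb] at this
    linarith

theorem level_mul_riseEnd_le (hbB : b < B) (hBd : B ≤ d) (k : ℕ) :
    level b B k * riseEnd d b B k ≤ d * riseStartCount d b B (k + 1) := by
  have hdl : 0 < (d : ℝ) - level b B k := sub_pos.2 ((level_lt hbB k).trans_le hBd)
  have h := Nat.le_ceil
    ((level b B k * riseStart d b B k - d * riseStartCount d b B k) / (d - level b B k))
  rw [div_le_iff₀ hdl] at h
  rw [riseStartCount_succ, riseEnd]
  push_cast
  nlinarith [h, show (riseLength d b B k : ℝ) = ⌈(level b B k * riseStart d b B k -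
    d * riseStartCount d b B k) / (d - level b B k)⌉₊ from rfl]

theorem d_mul_riseStartCount_succ_lt (hb : 0 < b) (hbB : b < B) (hBd : B ≤ d) (k : ℕ) :
    d * riseStartCount d b B (k + 1) < level b B k * riseEnd d b B k + d := by
  have hdl : 0 < (d : ℝ) - level b B k := sub_pos.2 ((level_lt hbB k).trans_le hBd)
  have hnum : 0 ≤ level b B k * riseStart d b B k - d * riseStartCount d b B k := by
    nlinarith [d_mul_riseStartCount_le (d := d) (B := B) hb k, b_lt_level hbB k,
      (Nat.cast_nonneg (riseStart d b B k) : (0 : ℝ) ≤ _)]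
  have h : ((riseLength d b B k : ℝ) - 1) * (d - level b B k) <
      level b B k * riseStart d b B k - d * riseStartCount d b B k := by
    have := Nat.ceil_lt_add_one (div_nonneg hnum hdl.le)
    rwa [← sub_lt_iff_lt_add, lt_div_iff₀ hdl] at this
  rw [riseStartCount_succ, riseEnd]
  push_cast
  nlinarith [hb.trans (b_lt_level hbB k)]

theorem riseLength_pos_of_riseStart_pos (hb : 0 < b) (hbB : b < B) (hBd : B ≤ d) {k : ℕ}
    (hu : 0 < riseStart d b B k) : 0 < riseLength d b B k := by
  rw [riseLength, Nat.ceil_pos]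
  refine div_pos ?_ (sub_pos.2 ((level_lt hbB k).trans_le hBd))
  have hu' : (0 : ℝ) < riseStart d b B k := Nat.cast_pos.2 hu
  nlinarith [d_mul_riseStartCount_le (d := d) (B := B) hb k, b_lt_level hbB k]

theorem riseStart_pos (hb : 0 < b) (hbB : b < B) (hBd : B ≤ d) :
    ∀ k, 0 < riseStart d b B k
  | 0 => by rw [riseStart_zero]; exact one_pos
  | k + 1 => by
    have hL := riseLength_pos_of_riseStart_pos hb hbB hBd (riseStart_pos hb hbB hBd k)
    have hd : (0 : ℝ) < d := hb.trans (hbB.trans_le hBd)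
    rw [riseStart_succ, Nat.ceil_pos, riseStartCount_succ]
    have : (0 : ℝ) < riseStartCount d b B k + riseLength d b B k := by
      have : (0 : ℝ) < riseLength d b B k := Nat.cast_pos.2 hL
      positivity
    push_cast
    positivity

theorem riseLength_pos (hb : 0 < b) (hbB : b < B) (hBd : B ≤ d) (k : ℕ) :
    0 < riseLength d b B k :=
  riseLength_pos_of_riseStart_pos hb hbB hBd (riseStart_pos hb hbB hBd k)

theorem riseStart_lt_riseEnd (hb : 0 < b) (hbB : b < B) (hBd : B ≤ d) (k : ℕ) :
    riseStart d b B k < riseEnd d b B k :=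
  Nat.lt_add_of_pos_right (riseLength_pos hb hbB hBd k)

theorem riseEnd_lt_riseStart_succ (hb : 0 < b) (hbB : b < B) (hBd : B ≤ d) (k : ℕ) :
    riseEnd d b B k < riseStart d b B (k + 1) := by
  have hv : (0 : ℝ) < riseEnd d b B k :=
    Nat.cast_pos.2 ((riseStart_pos hb hbB hBd k).trans (riseStart_lt_riseEnd hb hbB hBd k))
  have h := (mul_lt_mul_of_pos_right (b_lt_level hbB k) hv).trans_le
    ((level_mul_riseEnd_le hbB hBd k).trans (d_mul_riseStartCount_le hb (k + 1)))
  exact_mod_cast lt_of_mul_lt_mul_left h hb.le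

theorem riseStart_strictMono (hb : 0 < b) (hbB : b < B) (hBd : B ≤ d) :
    StrictMono (riseStart d b B) :=
  strictMono_nat_of_lt_succ fun k =>
    (riseStart_lt_riseEnd hb hbB hBd k).trans (riseEnd_lt_riseStart_succ hb hbB hBd k)

theorem riseEnd_strictMono (hb : 0 < b) (hbB : b < B) (hBd : B ≤ d) :
    StrictMono (riseEnd d b B) :=
  strictMono_nat_of_lt_succ fun k =>
    (riseEnd_lt_riseStart_succ hb hbB hBd k).trans (riseStart_lt_riseEnd hb hbB hBd (k + 1))

theorem count_freeDigits_of_rise {k m : ℕ} (h₁ : riseStart d b B k ≤ m)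
    (h₂ : m ≤ riseEnd d b B k) :
    Nat.count (· ∈ freeDigits d b B) m =
      Nat.count (· ∈ freeDigits d b B) (riseStart d b B k) + (m - riseStart d b B k) := by
  obtain ⟨i, rfl⟩ := Nat.exists_eq_add_of_le h₁
  rw [Nat.count_add, Nat.add_sub_cancel_left,
    Nat.count_of_forall (p := fun j => riseStart d b B k + j ∈ freeDigits d b B)
      fun j hj => ⟨k, Nat.le_add_right _ _, by omega⟩]

theorem count_freeDigits_of_gap (hb : 0 < b) (hbB : b < B) (hBd : B ≤ d) {k m : ℕ}
    (h₁ : riseEnd d b B k ≤ m) (h₂ : m ≤ riseStart d b B (k + 1)) :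
    Nat.count (· ∈ freeDigits d b B) m = Nat.count (· ∈ freeDigits d b B) (riseEnd d b B k) := by
  obtain ⟨i, rfl⟩ := Nat.exists_eq_add_of_le h₁
  rw [Nat.count_add, Nat.count_of_forall_not (p := fun j => riseEnd d b B k + j ∈ freeDigits d b B)
    fun j hj ⟨k', hk'₁, hk'₂⟩ => ?_, add_zero]
  rcases le_or_gt k' k with h | h
  · have := (riseEnd_strictMono hb hbB hBd).monotone h
    omega
  · have := (riseStart_strictMono hb hbB hBd).monotone (show k + 1 ≤ k' from h)
    omega

theorem count_freeDigits_riseStart (hb : 0 < b) (hbB : b < B) (hBd : B ≤ d) :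
    ∀ k, Nat.count (· ∈ freeDigits d b B) (riseStart d b B k) = riseStartCount d b B k
  | 0 => by
    rw [riseStart_zero, riseStartCount_zero]
    refine Nat.count_of_forall_not fun j hj ⟨k, hk, _⟩ => ?_
    have := riseStart_pos hb hbB hBd k
    omega
  | k + 1 => by
    rw [count_freeDigits_of_gap hb hbB hBd (riseEnd_lt_riseStart_succ hb hbB hBd k).le le_rfl,
      count_freeDigits_of_rise (riseStart_lt_riseEnd hb hbB hBd k).le le_rfl,
      count_freeDigits_riseStart hb hbB hBd k, riseStartCount_succ, riseEnd,
      Nat.add_sub_cancel_left]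

theorem count_freeDigits_riseEnd (hb : 0 < b) (hbB : b < B) (hBd : B ≤ d) (k : ℕ) :
    Nat.count (· ∈ freeDigits d b B) (riseEnd d b B k) = riseStartCount d b B (k + 1) := by
  rw [count_freeDigits_of_rise (riseStart_lt_riseEnd hb hbB hBd k).le le_rfl,
    count_freeDigits_riseStart hb hbB hBd k, riseStartCount_succ, riseEnd,
    Nat.add_sub_cancel_left]

theorem b_mul_le_count_freeDigits (hb : 0 < b) (hbB : b < B) (hBd : B ≤ d) (m : ℕ) :
    b * m ≤ d * Nat.count (· ∈ freeDigits d b B) m + b := by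
  rcases Nat.eq_zero_or_pos m with rfl | hm
  · simp [hb.le]
  obtain ⟨k, hk₁, hk₂⟩ := StrictMono.exists_le_lt_succ (riseStart_strictMono hb hbB hBd)
    (m := m) (by rwa [riseStart_zero])
  have hbd : b ≤ d := (hbB.trans_le hBd).le
  rcases le_total m (riseEnd d b B k) with hv | hv
  · rw [count_freeDigits_of_rise hk₁ hv, count_freeDigits_riseStart hb hbB hBd]
    have hum : (riseStart d b B k : ℝ) ≤ m := by exact_mod_cast hk₁
    push_cast [Nat.cast_sub hk₁]
    nlinarith [b_mul_riseStart_le (d := d) (B := B) hb k]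
  · rw [count_freeDigits_of_gap hb hbB hBd hv hk₂.le, count_freeDigits_riseEnd hb hbB hBd]
    have hmu : (m : ℝ) ≤ riseStart d b B (k + 1) := by exact_mod_cast hk₂.le
    nlinarith [b_mul_riseStart_le (d := d) (B := B) hb (k + 1)]

theorem count_freeDigits_le (hb : 0 < b) (hbB : b < B) (hBd : B ≤ d) (m : ℕ) :
    d * Nat.count (· ∈ freeDigits d b B) m ≤ B * m + d := by
  rcases Nat.eq_zero_or_pos m with rfl | hm
  · simp
  obtain ⟨k, hk₁, hk₂⟩ := StrictMono.exists_le_lt_succ (riseStart_strictMono hb hbB hBd)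
    (m := m) (by rwa [riseStart_zero])
  have hlev := level_lt hbB k
  have hlev0 := hb.trans (b_lt_level hbB k)
  have hend := d_mul_riseStartCount_succ_lt hb hbB hBd k
  rcases le_total m (riseEnd d b B k) with hv | hv
  · rw [count_freeDigits_of_rise hk₁ hv, count_freeDigits_riseStart hb hbB hBd]
    rw [riseStartCount_succ, riseEnd] at hend
    rw [riseEnd] at hv
    have hmv : (m : ℝ) ≤ riseStart d b B k + riseLength d b B k := by exact_mod_cast hv
    push_cast [Nat.cast_sub hk₁] at hend ⊢
    nlinarith
  · rw [count_freeDigits_of_gap hb hbB hBd hv hk₂.le, count_freeDigits_riseEnd hb hbB hBd]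
    have hvm : (riseEnd d b B k : ℝ) ≤ m := by exact_mod_cast hv
    nlinarith

theorem frequently_count_freeDigits_le (hb : 0 < b) (hbB : b < B) (hBd : B ≤ d) :
    ∃ᶠ U : ℕ in atTop, d * Nat.count (· ∈ freeDigits d b B) U ≤ b * U :=
  (riseStart_strictMono hb hbB hBd).tendsto_atTop.frequently (.of_forall fun k => by
    rw [count_freeDigits_riseStart hb hbB hBd]
    exact d_mul_riseStartCount_le hb k)

theorem frequently_le_count_freeDigits (hb : 0 < b) (hbB : b < B) (hBd : B ≤ d) {ε : ℝ}
    (hε : 0 < ε) : ∃ᶠ V : ℕ in atTop, (B - ε) * V ≤ d * Nat.count (· ∈ freeDigits d b B) V := by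
  have hlevel : ∀ᶠ k in atTop, B - ε < level b B k :=
    tendsto_level.eventually (eventually_gt_nhds (sub_lt_self B hε))
  refine (riseEnd_strictMono hb hbB hBd).tendsto_atTop.frequently
    (hlevel.frequently.mono fun k hk => ?_)
  rw [count_freeDigits_riseEnd hb hbB hBd]
  exact (mul_le_mul_of_nonneg_right hk.le (Nat.cast_nonneg _)).trans
    (level_mul_riseEnd_le hbB hBd k)

theorem sub_mul_le_of_count_freeDigits_lt (hb : 0 < b) (hbB : b < B) (hBd : B ≤ d) {t : ℝ}
    (hbt : b ≤ t) {k n : ℕ} (hn : n ≤ riseEnd d b B (k + 1))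
    (h : d * Nat.count (· ∈ freeDigits d b B) n < t * n + d) :
    (d - t) * n ≤ (d - b) * riseStart d b B (k + 1) + b + d := by
  rcases le_total n (riseStart d b B (k + 1)) with hnu | hnu
  · have : (n : ℝ) ≤ riseStart d b B (k + 1) := by exact_mod_cast hnu
    nlinarith [(Nat.cast_nonneg n : (0 : ℝ) ≤ n)]
  · rw [count_freeDigits_of_rise hnu hn, count_freeDigits_riseStart hb hbB hBd] at h
    push_cast [Nat.cast_sub hnu] at h
    nlinarith [b_mul_riseStart_le (d := d) (B := B) hb (k + 1)]

theorem eventually_mul_riseEnd_add_le (hb : 0 < b) (hbB : b < B) (hBd : B ≤ d) {t : ℝ}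
    (htB : t < B) : ∀ᶠ k in atTop, t * riseEnd d b B k + d ≤ level b B k * riseEnd d b B k := by
  have hlevel : ∀ᶠ k in atTop, (t + B) / 2 < level b B k :=
    tendsto_level.eventually (eventually_gt_nhds (by linarith))
  have hend : ∀ᶠ k in atTop, ⌈2 * d / (B - t)⌉₊ ≤ riseEnd d b B k :=
    (riseEnd_strictMono hb hbB hBd).tendsto_atTop.eventually (eventually_ge_atTop _)
  filter_upwards [hlevel, hend] with k hk hv
  have hv' := Nat.ceil_le.1 hv
  rw [div_le_iff₀ (sub_pos.2 htB)] at hv'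
  nlinarith

/-- If the density at `n` is below `t`, then `n` comes before the block starting at `U` lifts the
density back to `t`, so `n ≲ (d - b) U / (d - t)`; while in the preceding gap the density is
still above `t` at `m ≈ b U / t`. -/
theorem exists_le_count_freeDigits_of_count_lt (hb : 0 < b) (hbB : b < B) (hBd : B ≤ d)
    {t : ℝ} (hbt : b < t) (htd : t < d) {k n : ℕ}
    (hk : t * riseEnd d b B k + d ≤ level b B k * riseEnd d b B k) (hk₁ : riseEnd d b B k ≤ n)
    (hk₂ : n ≤ riseEnd d b B (k + 1)) (hn : d * Nat.count (· ∈ freeDigits d b B) n < t * n + d) :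
    ∃ m : ℕ, riseEnd d b B k ≤ m ∧ m ≤ n ∧
      extremalExponent d b t * n ≤
        m + (extremalExponent d b t * (b + d) / (d - t) + (b + d + t) / t) ∧
      t * m + d ≤ d * Nat.count (· ∈ freeDigits d b B) m := by
  set P := extremalExponent d b t
  have ht : 0 < t := hb.trans hbt
  have hdt : 0 < (d : ℝ) - t := sub_pos.2 htd
  have hPt := extremalExponent_mul ht.ne' (hbt.trans htd)
  have hΦ : ∀ m, riseEnd d b B k ≤ m →
      (d : ℝ) * riseStartCount d b B (k + 1) ≤ d * Nat.count (· ∈ freeDigits d b B) m :=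
    fun m hm => by
      rw [← count_freeDigits_riseEnd hb hbB hBd]
      gcongr
  set Φ : ℝ := d * riseStartCount d b B (k + 1)
  have hvΦ : t * riseEnd d b B k + d ≤ Φ := hk.trans (level_mul_riseEnd_le hbB hBd k)
  set m := ⌊(Φ - d) / t⌋₊
  have hvm : riseEnd d b B k ≤ m := Nat.le_floor (by rw [le_div_iff₀ ht]; linarith)
  have htm : t * m ≤ Φ - d := by
    have := Nat.floor_le (a := (Φ - d) / t) (div_nonneg
      (by nlinarith [(Nat.cast_nonneg (riseEnd d b B k) : (0 : ℝ) ≤ _)]) ht.le)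
    rwa [le_div_iff₀ ht, mul_comm] at this
  have htm' : Φ - d - t < t * m := by
    have := Nat.lt_floor_add_one ((Φ - d) / t)
    rw [div_lt_iff₀ ht] at this
    linarith
  have hmn : t * m < t * n := by linarith [hΦ n hk₁]
  refine ⟨m, hvm, by exact_mod_cast (lt_of_mul_lt_mul_left hmn ht.le).le, ?_,
    by linarith [hΦ m hvm]⟩
  have h₁ := mul_le_mul_of_nonneg_left
    (sub_mul_le_of_count_freeDigits_lt hb hbB hBd hbt.le hk₂ hn)
    (mul_pos ht (extremalExponent_pos hb hbt htd)).le
  have h₂ := mul_le_mul_of_nonneg_left (b_mul_riseStart_le (d := d) (B := B) hb (k + 1)) hdt.le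
  have h₃ := mul_lt_mul_of_pos_left htm' hdt
  have e : t * P * ((d - b) * riseStart d b B (k + 1)) =
      (d - t) * (b * riseStart d b B (k + 1)) := by
    linear_combination (riseStart d b B (k + 1) : ℝ) * hPt
  have hK₀ : t * (d - t) * (P * (b + d) / (d - t) + (b + d + t) / t) =
      t * P * (b + d) + (d - t) * (b + d + t) := by
    field_simp
  refine (lt_of_mul_lt_mul_left (a := t * (d - t)) ?_ (mul_pos ht hdt).le).le
  linarith

theorem eventually_exists_le_count_freeDigits (hb : 0 < b) (hbB : b < B) (hBd : B ≤ d) {t ε : ℝ}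
    (hbt : b < t) (htB : t < B) (hε : 0 < ε) :
    ∀ᶠ n : ℕ in atTop, ∃ m : ℕ, 0 < m ∧ m ≤ n ∧ (extremalExponent d b t - ε) * n ≤ m ∧
      t * m + d ≤ d * Nat.count (· ∈ freeDigits d b B) m := by
  have htd : t < d := htB.trans_le hBd
  have hvend := riseEnd_strictMono hb hbB hBd
  obtain ⟨K, hK⟩ := eventually_atTop.1 (eventually_mul_riseEnd_add_le hb hbB hBd htB)
  set K₀ := extremalExponent d b t * (b + d) / (d - t) + (b + d + t) / t
  filter_upwards [eventually_ge_atTop (riseEnd d b B K), eventually_ge_atTop ⌈K₀ / ε⌉₊]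
    with n hnK hnε
  have hεn : K₀ ≤ ε * n := by rw [← div_le_iff₀' hε]; exact Nat.ceil_le.1 hnε
  obtain ⟨k, hk₁, hk₂⟩ := hvend.exists_le_lt_succ (hvend.monotone (Nat.zero_le K) |>.trans hnK)
  have hkK : K ≤ k := Nat.lt_succ_iff.1 (hvend.lt_iff_lt.1 (hnK.trans_lt hk₂))
  have hv0 : 0 < riseEnd d b B k :=
    (riseStart_pos hb hbB hBd k).trans (riseStart_lt_riseEnd hb hbB hBd k)
  rcases le_or_gt (t * n + d) (d * Nat.count (· ∈ freeDigits d b B) n) with hgood | hbad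
  · have := extremalExponent_le_one hb hbt htd
    exact ⟨n, hv0.trans_le hk₁, le_rfl, by nlinarith, hgood⟩
  obtain ⟨m, hvm, hmn, hPm, hm⟩ :=
    exists_le_count_freeDigits_of_count_lt hb hbB hBd hbt htd (hK k hkK) hk₁ hk₂.le hbad
  exact ⟨m, hv0.trans_le hvm, hmn, by linarith, hm⟩

end Construction

variable {d : ℕ} {b B : ℝ}

theorem lbDim_digitProd_freeDigits (hb : 0 < b) (hbB : b < B) (hBd : B ≤ d) :
    lbDim (digitProd d (freeDigits d b B)) = b :=
  liminf_eq_of_forall_pos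
    (fun _ hε => eventually_le_dimRatio hb.le (b_mul_le_count_freeDigits hb hbB hBd) hε)
    (fun _ hε => frequently_dimRatio_le (frequently_count_freeDigits_le hb hbB hBd) hε)
    (isBoundedUnder_of_eventually_le (eventually_dimRatio_le (hb.trans hbB).le
      (count_freeDigits_le hb hbB hBd) one_pos))

theorem ubDim_digitProd_freeDigits (hb : 0 < b) (hbB : b < B) (hBd : B ≤ d) :
    ubDim (digitProd d (freeDigits d b B)) = B :=
  limsup_eq_of_forall_pos
    (fun _ hε => eventually_dimRatio_le (hb.trans hbB).le (count_freeDigits_le hb hbB hBd) hε)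
    (fun _ hε => frequently_le_dimRatio (fun _ => frequently_le_count_freeDigits hb hbB hBd) hε)
    (isBoundedUnder_of_eventually_ge (eventually_le_dimRatio hb.le
      (b_mul_le_count_freeDigits hb hbB hBd) one_pos))

theorem creT_digitProd_freeDigits (hb : 0 < b) (hbB : b < B) (hBd : B ≤ d) {t : ℝ}
    (ht : t ∈ Ioo b B) :
    creT (digitProd d (freeDigits d b B)) t = extremalExponent d b t := by
  have htd : t < d := ht.2.trans_le hBd
  refine liminf_eq_of_forall_pos (fun ε hε => ?_)
    (fun _ hε => frequently_cre_digitProd_le (frequently_count_freeDigits_le hb hbB hBd) hb ht.1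
      htd hε)
    (isBoundedUnder_of_eventually_le (.of_forall (cre_le_one _ t)))
  have h := eventually_le_cre_digitProd
    ((sub_le_self _ (half_pos hε).le).trans (extremalExponent_le_one hb ht.1 htd)) (half_pos hε)
    (eventually_exists_le_count_freeDigits hb hbB hBd ht.1 ht.2 (half_pos hε))
  simpa only [sub_sub, add_halves] using h

end Condensation

end

theorem exists_condensation_with_extremal_creT
    (d : ℕ) (b B : ℝ) (hb : 0 < b) (hbB : b < B) (hBd : B ≤ (d : ℝ)) :
    ∃ C : Set (EuclideanSpace ℝ (Fin d)),
      C ⊆ {x : EuclideanSpace ℝ (Fin d) | ∀ i, x i ∈ Set.Icc (0 : ℝ) 1} ∧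
      IsCompact C ∧ lbDim C = b ∧ ubDim C = B ∧
      ∀ t : ℝ, t ∈ Set.Ioo b B →
        creT C t = (b / t) * (((d : ℝ) - t) / ((d : ℝ) - b)) :=
  ⟨_, Condensation.digitProd_subset_cube _ d, Condensation.isCompact_digitProd _ d,
    Condensation.lbDim_digitProd_freeDigits hb hbB hBd,
    Condensation.ubDim_digitProd_freeDigits hb hbB hBd,
    fun _ ht => Condensation.creT_digitProd_freeDigits hb hbB hBd ht⟩
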